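/- Let f : ℝ^d → ℝ with ∫ e^{−f} < ∞ and define for m ≥ 1 and y_{1:m} ∈ (ℝ^d)^m the joint density p(y_{1:m}) ∝ ∫ e^{−f(x)} exp(−(1/2σ²)∑_{t=1}^m ‖x − y_t‖²) dx. Then log p(y_{1:m}) = φ(ȳ_{1:m}; σ/√m) + (m/2σ²)(‖ȳ_{1:m}‖² − (1/m)∑_t ‖y_t‖²) + const, where ȳ_{1:m} = (1/m)∑_t y_t and φ(y; s) = log 𝔼_{x~N(y, s²I)}[e^{−f(x)}]. Consequently the Bayes estimator satisfies 𝔼[X | y_{1:m}] = ȳ_{1:m} + (σ²/m)∇φ(ȳ_{1:m}; σ/√m). -/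

import Mathlib

open MeasureTheory Real

noncomputable section

def sqDist {d : ℕ} (x y : Fin d → ℝ) : ℝ := ∑ i, (x i - y i) ^ 2

/-- Density of the isotropic Gaussian `N(y, s² I)` evaluated at `x`. -/
def gKer (d : ℕ) (s : ℝ) (y x : Fin d → ℝ) : ℝ :=
  (2 * π * s ^ 2) ^ (-(d : ℝ) / 2) * Real.exp (-sqDist x y / (2 * s ^ 2))

def grad' {d : ℕ} (g : (Fin d → ℝ) → ℝ) (y : Fin d → ℝ) (i : Fin d) : ℝ :=
  fderiv ℝ g y (Pi.single i 1)

/-- `φ(y; s) = log 𝔼_{x ~ N(y, s²I)}[e^{−f(x)}]`. -/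
def φfun (d : ℕ) (f : (Fin d → ℝ) → ℝ) (s : ℝ) (y : Fin d → ℝ) : ℝ :=
  Real.log (∫ x, gKer d s y x * Real.exp (-f x))

/-- The unnormalized `(σ, m)`-density `∫ e^{−f(x)} exp(−(1/2σ²)∑_t ‖x − y_t‖²) dx`. -/
def smDens (d : ℕ) (f : (Fin d → ℝ) → ℝ) (σ : ℝ) (m : ℕ)
    (y : Fin m → Fin d → ℝ) : ℝ :=
  ∫ x, Real.exp (-f x) * Real.exp (-(1 / (2 * σ ^ 2)) * ∑ t, sqDist x (y t))

/-- The empirical mean of the `m` measurements. -/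
def ybar {d : ℕ} (m : ℕ) (y : Fin m → Fin d → ℝ) : Fin d → ℝ :=
  (m : ℝ)⁻¹ • ∑ t, y t

/-!
Completing the square, `∑ₜ ‖x - yₜ‖² = m ‖x - ȳ‖² + ∑ₜ ‖yₜ‖² - m ‖ȳ‖²`, so the `(σ, m)`-density
is the Gaussian smoothing of `e^{-f}` at scale `s = σ / √m`, evaluated at `ȳ`, times a factor that
depends on `y` only through `ȳ` and `∑ₜ ‖yₜ‖²`. The decomposition of `log p` is then immediate,
and the estimator formula is Tweedie's formula `𝔼[X | z] = z + s² ∇ log (gaussSmooth d s e^{-f}) z`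
for a single measurement at scale `s`. That one is obtained by differentiating under the integral
sign, which is legitimate because `|xᵢ - zᵢ| · N(z, s²)(x)` is bounded uniformly in `x` and `z`.
-/

def gaussSmooth (d : ℕ) (s : ℝ) (g : (Fin d → ℝ) → ℝ) (z : Fin d → ℝ) : ℝ :=
  ∫ x, gKer d s z x * g x

def coordPairing {d : ℕ} (v : Fin d → ℝ) : (Fin d → ℝ) →L[ℝ] ℝ :=
  ∑ i, v i • ContinuousLinearMap.proj i

@[simp]
lemma coordPairing_apply {d : ℕ} (v w : Fin d → ℝ) : coordPairing v w = ∑ i, v i * w i := by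
  simp [coordPairing]

lemma coordPairing_single {d : ℕ} (v : Fin d → ℝ) (i : Fin d) :
    coordPairing v (Pi.single i 1) = v i := by
  simp [Pi.single_apply]

lemma norm_coordPairing_le {d : ℕ} (v : Fin d → ℝ) : ‖coordPairing v‖ ≤ ∑ i, |v i| := by
  refine ContinuousLinearMap.opNorm_le_bound _ (by positivity) fun w => ?_
  calc ‖coordPairing v w‖ ≤ ∑ i, ‖v i * w i‖ := by
        rw [coordPairing_apply]; exact norm_sum_le _ _
    _ ≤ ∑ i, |v i| * ‖w‖ := Finset.sum_le_sum fun i _ => by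
        rw [norm_mul, Real.norm_eq_abs]
        exact mul_le_mul_of_nonneg_left (norm_le_pi_norm w i) (abs_nonneg _)
    _ = (∑ i, |v i|) * ‖w‖ := (Finset.sum_mul _ _ _).symm

lemma sum_sq_sub_eq {m : ℕ} (hm : (m : ℝ) ≠ 0) (a : Fin m → ℝ) (b : ℝ) :
    ∑ t, (b - a t) ^ 2
      = m * (b - (m : ℝ)⁻¹ * ∑ t, a t) ^ 2
        + ((∑ t, a t ^ 2) - m * ((m : ℝ)⁻¹ * ∑ t, a t) ^ 2) := by
  have hexpand : ∑ t, (b - a t) ^ 2 = m * b ^ 2 - 2 * b * ∑ t, a t + ∑ t, a t ^ 2 := by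
    simp only [sub_sq, Finset.sum_add_distrib, Finset.sum_sub_distrib, ← Finset.mul_sum,
      Finset.sum_const, Finset.card_univ, Fintype.card_fin, nsmul_eq_mul]
  rw [hexpand]
  field_simp
  ring

lemma sum_sqDist_eq {d m : ℕ} (hm : (m : ℝ) ≠ 0) (y : Fin m → Fin d → ℝ) (x : Fin d → ℝ) :
    ∑ t, sqDist x (y t)
      = m * sqDist x (ybar m y) + ((∑ t, ∑ i, y t i ^ 2) - m * ∑ i, ybar m y i ^ 2) := by
  have hybar : ∀ i, ybar m y i = (m : ℝ)⁻¹ * ∑ t, y t i := fun i => by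
    simp [ybar, Finset.sum_apply]
  simp only [sqDist, hybar]
  rw [Finset.sum_comm, Finset.sum_comm (f := fun t i => y t i ^ 2), Finset.mul_sum,
    Finset.mul_sum, ← Finset.sum_sub_distrib, ← Finset.sum_add_distrib]
  exact Finset.sum_congr rfl fun i _ => sum_sq_sub_eq hm (fun t => y t i) (x i)

lemma abs_mul_exp_neg_sq_div_le {s : ℝ} (hs : s ≠ 0) (t : ℝ) :
    |t| * exp (-t ^ 2 / (2 * s ^ 2)) ≤ 1 + 2 * s ^ 2 := by
  set u := t ^ 2 / (2 * s ^ 2)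
  have hu : 2 * s ^ 2 * u = t ^ 2 := by simp only [u]; field_simp
  have hexp : (1 + u) * exp (-u) ≤ 1 := by
    rw [exp_neg, ← div_eq_mul_inv, div_le_one (exp_pos u)]
    linarith [add_one_le_exp u]
  have ht : |t| ≤ (1 + 2 * s ^ 2) * (1 + u) := by
    have hu0 : 0 ≤ u := by positivity
    nlinarith [sq_abs t, sq_nonneg (|t| - 1)]
  calc |t| * exp (-t ^ 2 / (2 * s ^ 2)) ≤ (1 + 2 * s ^ 2) * (1 + u) * exp (-u) := by
        rw [neg_div]; exact mul_le_mul_of_nonneg_right ht (exp_nonneg _)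
    _ ≤ 1 + 2 * s ^ 2 := by
        rw [mul_assoc]; exact mul_le_of_le_one_right (by positivity) hexp

section Kernel

variable {d : ℕ} {s : ℝ}

lemma gKer_pos (hs : s ≠ 0) (z x : Fin d → ℝ) : 0 < gKer d s z x := by
  unfold gKer; positivity

lemma gKer_le (z x : Fin d → ℝ) : gKer d s z x ≤ (2 * π * s ^ 2) ^ (-(d : ℝ) / 2) := by
  have hq : 0 ≤ sqDist x z / (2 * s ^ 2) := by
    unfold sqDist; positivity
  unfold gKer
  refine mul_le_of_le_one_right (by positivity) ?_
  rw [exp_le_one_iff, neg_div]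
  linarith

lemma abs_sub_mul_gKer_le (hs : s ≠ 0) (z x : Fin d → ℝ) (i : Fin d) :
    |x i - z i| * gKer d s z x ≤ (2 * π * s ^ 2) ^ (-(d : ℝ) / 2) * (1 + 2 * s ^ 2) := by
  have hcoord : (x i - z i) ^ 2 ≤ sqDist x z :=
    Finset.single_le_sum (f := fun j => (x j - z j) ^ 2) (fun j _ => sq_nonneg _)
      (Finset.mem_univ i)
  have hexp : exp (-sqDist x z / (2 * s ^ 2)) ≤ exp (-(x i - z i) ^ 2 / (2 * s ^ 2)) := by
    gcongr
  calc |x i - z i| * gKer d s z x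
      = (2 * π * s ^ 2) ^ (-(d : ℝ) / 2) * (|x i - z i| * exp (-sqDist x z / (2 * s ^ 2))) := by
        unfold gKer; ring
    _ ≤ (2 * π * s ^ 2) ^ (-(d : ℝ) / 2) * (1 + 2 * s ^ 2) := by
        gcongr
        exact (mul_le_mul_of_nonneg_left hexp (abs_nonneg _)).trans
          (abs_mul_exp_neg_sq_div_le hs _)

@[fun_prop]
lemma continuous_gKer (z : Fin d → ℝ) : Continuous (gKer d s z) := by
  unfold gKer sqDist; fun_prop

lemma hasFDerivAt_sqDist_right (x z : Fin d → ℝ) :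
    HasFDerivAt (sqDist x) (coordPairing (2 • (z - x))) z := by
  have hcoord : ∀ i, HasFDerivAt (fun w : Fin d → ℝ => x i - w i)
      (-ContinuousLinearMap.proj i) z := fun i => (hasFDerivAt_apply (𝕜 := ℝ) i z).const_sub (x i)
  have h := HasFDerivAt.fun_sum fun i (_ : i ∈ Finset.univ) => (hcoord i).pow 2
  refine h.congr_fderiv ?_
  ext w
  simp only [Nat.add_one_sub_one, pow_one, nsmul_eq_mul, Nat.cast_ofNat, smul_neg, neg_apply,
    sum_apply, smul_apply, ContinuousLinearMap.proj_apply, smul_eq_mul, coordPairing_apply,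
    Pi.mul_apply, Pi.ofNat_apply, Pi.sub_apply]
  exact Finset.sum_congr rfl fun i _ => by ring

lemma hasFDerivAt_gKer (x z : Fin d → ℝ) :
    HasFDerivAt (fun w => gKer d s w x) (gKer d s z x • coordPairing ((s ^ 2)⁻¹ • (x - z))) z := by
  have h := (((hasFDerivAt_sqDist_right x z).fun_neg.mul_const (2 * s ^ 2)⁻¹).exp).const_mul
    ((2 * π * s ^ 2) ^ (-(d : ℝ) / 2))
  refine (h.congr_fderiv ?_).congr_of_eventuallyEq (.of_forall fun w => ?_)
  · ext w
    simp only [gKer, div_eq_mul_inv, nsmul_eq_mul, Nat.cast_ofNat, smul_neg, neg_apply, smul_apply,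
      coordPairing_apply, Pi.mul_apply, Pi.ofNat_apply, Pi.sub_apply, Pi.smul_apply, smul_eq_mul,
      Finset.mul_sum, ← Finset.sum_neg_distrib]
    exact Finset.sum_congr rfl fun i _ => by ring
  · simp [gKer, div_eq_mul_inv]

lemma norm_gKer_smul_coordPairing_le (hs : s ≠ 0) (z x : Fin d → ℝ) :
    ‖gKer d s z x • coordPairing ((s ^ 2)⁻¹ • (x - z))‖
      ≤ (s ^ 2)⁻¹ * (d * ((2 * π * s ^ 2) ^ (-(d : ℝ) / 2) * (1 + 2 * s ^ 2))) := by
  have hpos := gKer_pos hs z x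
  calc ‖gKer d s z x • coordPairing ((s ^ 2)⁻¹ • (x - z))‖
      ≤ gKer d s z x * ∑ i, |(s ^ 2)⁻¹ * (x i - z i)| := by
        rw [norm_smul, Real.norm_of_nonneg hpos.le]
        exact mul_le_mul_of_nonneg_left (norm_coordPairing_le _) hpos.le
    _ = (s ^ 2)⁻¹ * ∑ i, |x i - z i| * gKer d s z x := by
        rw [Finset.mul_sum, Finset.mul_sum]
        refine Finset.sum_congr rfl fun i _ => ?_
        rw [abs_mul, abs_of_pos (by positivity : (0 : ℝ) < (s ^ 2)⁻¹)]
        ring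
    _ ≤ (s ^ 2)⁻¹ * ∑ _i : Fin d, (2 * π * s ^ 2) ^ (-(d : ℝ) / 2) * (1 + 2 * s ^ 2) := by
        gcongr (s ^ 2)⁻¹ * ?_
        exact Finset.sum_le_sum fun i _ => abs_sub_mul_gKer_le hs z x i
    _ = _ := by simp

end Kernel

section Smoothing

variable {d : ℕ} {s : ℝ} {g : (Fin d → ℝ) → ℝ}

lemma integrable_gKer_mul (hs : s ≠ 0) (hg : Integrable g) (z : Fin d → ℝ) :
    Integrable fun x => gKer d s z x * g x :=
  hg.bdd_mul (continuous_gKer z).aestronglyMeasurable (ae_of_all _ fun x => by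
    rw [Real.norm_of_nonneg (gKer_pos hs z x).le]; exact gKer_le z x)

lemma integrable_sub_mul_gKer_mul (hs : s ≠ 0) (hg : Integrable g) (z : Fin d → ℝ) (i : Fin d) :
    Integrable fun x => (x i - z i) * (gKer d s z x * g x) := by
  simp_rw [← mul_assoc]
  refine hg.bdd_mul (c := (2 * π * s ^ 2) ^ (-(d : ℝ) / 2) * (1 + 2 * s ^ 2)) (by fun_prop)
    (ae_of_all _ fun x => ?_)
  rw [norm_mul, Real.norm_eq_abs, Real.norm_of_nonneg (gKer_pos hs z x).le]
  exact abs_sub_mul_gKer_le hs z x i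

lemma gaussSmooth_pos (hs : s ≠ 0) (hg : Integrable g) (hg_pos : ∀ x, 0 < g x) (z : Fin d → ℝ) :
    0 < gaussSmooth d s g z := by
  have hpos : ∀ x, 0 < gKer d s z x * g x := fun x => mul_pos (gKer_pos hs z x) (hg_pos x)
  rw [gaussSmooth, integral_pos_iff_support_of_nonneg (fun x => (hpos x).le)
    (integrable_gKer_mul hs hg z), Function.support_eq_univ fun x => (hpos x).ne']
  exact isOpen_univ.measure_pos volume Set.univ_nonempty

lemma integrable_smul_gKer_smul_coordPairing (hs : s ≠ 0) (hg : Integrable g) (z : Fin d → ℝ) :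
    Integrable fun x => g x • gKer d s z x • coordPairing ((s ^ 2)⁻¹ • (x - z)) :=
  hg.smul_bdd _ (by unfold coordPairing; fun_prop)
    (ae_of_all _ fun x => norm_gKer_smul_coordPairing_le hs z x)

lemma hasFDerivAt_gaussSmooth (hs : s ≠ 0) (hg : Integrable g) (z : Fin d → ℝ) :
    HasFDerivAt (gaussSmooth d s g)
      (∫ x, g x • gKer d s z x • coordPairing ((s ^ 2)⁻¹ • (x - z))) z :=
  hasFDerivAt_integral_of_dominated_of_fderiv_le
    (F' := fun w x => g x • gKer d s w x • coordPairing ((s ^ 2)⁻¹ • (x - w))) Filter.univ_mem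
    (.of_forall fun w => (integrable_gKer_mul hs hg w).aestronglyMeasurable)
    (integrable_gKer_mul hs hg z)
    (integrable_smul_gKer_smul_coordPairing hs hg z).aestronglyMeasurable
    (ae_of_all _ fun x w _ => (norm_smul _ _).trans_le
      (mul_le_mul_of_nonneg_left (norm_gKer_smul_coordPairing_le hs w x) (norm_nonneg _)))
    (hg.norm.mul_const _)
    (ae_of_all _ fun x w _ => (hasFDerivAt_gKer x w).mul_const (g x))

lemma fderiv_gaussSmooth_single (hs : s ≠ 0) (hg : Integrable g) (z : Fin d → ℝ) (i : Fin d) :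
    fderiv ℝ (gaussSmooth d s g) z (Pi.single i 1)
      = (s ^ 2)⁻¹ * ∫ x, (x i - z i) * (gKer d s z x * g x) := by
  rw [(hasFDerivAt_gaussSmooth hs hg z).fderiv,
    ContinuousLinearMap.integral_apply (integrable_smul_gKer_smul_coordPairing hs hg z),
    ← integral_const_mul]
  refine integral_congr_ae (ae_of_all _ fun x => ?_)
  simp only [smul_apply, coordPairing_single, Pi.smul_apply, Pi.sub_apply, smul_eq_mul]
  ring

theorem integral_mul_gKer_div_gaussSmooth (hs : s ≠ 0) (hg : Integrable g) {z : Fin d → ℝ}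
    (hz : gaussSmooth d s g z ≠ 0) (i : Fin d) :
    (∫ x, x i * (gKer d s z x * g x)) / gaussSmooth d s g z
      = z i + s ^ 2 * grad' (fun w => log (gaussSmooth d s g w)) z i := by
  have hgrad : grad' (fun w => log (gaussSmooth d s g w)) z i
      = (gaussSmooth d s g z)⁻¹ * ((s ^ 2)⁻¹ * ∫ x, (x i - z i) * (gKer d s z x * g x)) := by
    rw [grad', ((hasFDerivAt_gaussSmooth hs hg z).log hz).fderiv, smul_apply,
      ← fderiv_gaussSmooth_single hs hg z i, (hasFDerivAt_gaussSmooth hs hg z).fderiv, smul_eq_mul]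
  have hsplit : ∫ x, x i * (gKer d s z x * g x)
      = (∫ x, (x i - z i) * (gKer d s z x * g x)) + z i * gaussSmooth d s g z := by
    rw [gaussSmooth, ← integral_const_mul, ← integral_add (integrable_sub_mul_gKer_mul hs hg z i)
      ((integrable_gKer_mul hs hg z).const_mul _)]
    exact integral_congr_ae (ae_of_all _ fun x => by ring)
  rw [hgrad, hsplit]
  field_simp
  ring

end Smoothing

lemma exp_neg_sum_sqDist_eq {d m : ℕ} (hm : 0 < m) {σ : ℝ} (hσ : σ ≠ 0)
    (y : Fin m → Fin d → ℝ) (x : Fin d → ℝ) :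
    exp (-(1 / (2 * σ ^ 2)) * ∑ t, sqDist x (y t))
      = exp ((m : ℝ) / (2 * σ ^ 2) * ((∑ i, ybar m y i ^ 2) - (m : ℝ)⁻¹ * ∑ t, ∑ i, y t i ^ 2))
          / (2 * π * (σ / √m) ^ 2) ^ (-(d : ℝ) / 2) * gKer d (σ / √m) (ybar m y) x := by
  have hm' : (m : ℝ) ≠ 0 := by positivity
  have hC : (2 * π * (σ / √m) ^ 2) ^ (-(d : ℝ) / 2) ≠ 0 := by positivity
  rw [gKer, ← mul_assoc, div_mul_cancel₀ _ hC, ← exp_add, sum_sqDist_eq hm', div_pow,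
    sq_sqrt (Nat.cast_nonneg m)]
  congr 1
  field_simp
  ring

/-- Decomposition `log p(y_{1:m}) = φ(ȳ; σ/√m) + (m/2σ²)(‖ȳ‖² − (1/m)∑‖y_t‖²) + const`,
and the Bayes estimator `𝔼[X|y_{1:m}] = ȳ + (σ²/m)∇φ(ȳ; σ/√m)`. -/
theorem stmt19 (d m : ℕ) (hm : 0 < m) (σ : ℝ) (hσ : 0 < σ)
    (f : (Fin d → ℝ) → ℝ) (hfi : Integrable fun x => Real.exp (-f x)) :
    (∃ c : ℝ, ∀ y : Fin m → Fin d → ℝ,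
        Real.log (smDens d f σ m y)
          = φfun d f (σ / Real.sqrt m) (ybar m y)
            + ((m : ℝ) / (2 * σ ^ 2))
                * ((∑ i, ybar m y i ^ 2) - (m : ℝ)⁻¹ * ∑ t, ∑ i, y t i ^ 2)
            + c)
    ∧ ∀ (y : Fin m → Fin d → ℝ) (i : Fin d),
        (∫ x, x i * (Real.exp (-f x)
              * Real.exp (-(1 / (2 * σ ^ 2)) * ∑ t, sqDist x (y t))))
            / smDens d f σ m y
          = ybar m y i
            + (σ ^ 2 / m) * grad' (φfun d f (σ / Real.sqrt m)) (ybar m y) i := by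
  set s := σ / √m
  have hs : s ≠ 0 := by positivity
  set C := (2 * π * s ^ 2) ^ (-(d : ℝ) / 2)
  set E := fun y : Fin m → Fin d → ℝ =>
    (m : ℝ) / (2 * σ ^ 2) * ((∑ i, ybar m y i ^ 2) - (m : ℝ)⁻¹ * ∑ t, ∑ i, y t i ^ 2)
  have hfac : ∀ y x, exp (-f x) * exp (-(1 / (2 * σ ^ 2)) * ∑ t, sqDist x (y t))
      = exp (E y) / C * (gKer d s (ybar m y) x * exp (-f x)) := fun y x => by
    rw [exp_neg_sum_sqDist_eq hm hσ.ne']; ring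
  have hdens : ∀ y,
      smDens d f σ m y = exp (E y) / C * gaussSmooth d s (fun x => exp (-f x)) (ybar m y) :=
    fun y => by simp_rw [smDens, hfac]; exact integral_const_mul _ _
  have hK : ∀ y, exp (E y) / C ≠ 0 := fun y => by positivity
  have hG : ∀ z, 0 < gaussSmooth d s (fun x => exp (-f x)) z :=
    gaussSmooth_pos hs hfi fun x => exp_pos _
  refine ⟨⟨-log C, fun y => ?_⟩, fun y i => ?_⟩
  · rw [hdens, log_mul (hK y) (hG _).ne', log_div (exp_pos _).ne' (by positivity), log_exp]
    simp only [φfun, gaussSmooth, E]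
    ring
  · have hnum : ∫ x, x i * (exp (-f x) * exp (-(1 / (2 * σ ^ 2)) * ∑ t, sqDist x (y t)))
        = exp (E y) / C * ∫ x, x i * (gKer d s (ybar m y) x * exp (-f x)) := by
      simp_rw [hfac, mul_left_comm _ (exp (E y) / C)]; exact integral_const_mul _ _
    have hs2 : s ^ 2 = σ ^ 2 / m := by
      rw [div_pow, sq_sqrt (Nat.cast_nonneg m)]
    rw [hnum, hdens, mul_div_mul_left _ _ (hK y),
      integral_mul_gKer_div_gaussSmooth hs hfi (hG _).ne', hs2]
    rfl

end
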